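/- For all sets A, B and every natural number n ≥ 1, F(n+2, A × B) = F(n, A) × F(n, B), where × denotes the Cartesian product formed with Kuratowski pairs. -/
import Mathlib

open ZFSet

/-- The approximation function: `F 0 A = ∅`, `F (n+1) A = {F n x | x ∈ A}`. -/
noncomputable def F : ℕ → ZFSet → ZFSet
  | 0, _ => ∅
  | n + 1, A => @ZFSet.image (F n) (Classical.allZFSetDefinable fun s => F n (s 0)) A

lemma mem_F_succ {n : ℕ} {A y : ZFSet} : y ∈ F (n + 1) A ↔ ∃ x ∈ A, F n x = y := by
  simp [F, ZFSet.mem_image]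

lemma F_singleton (n : ℕ) (a : ZFSet) : F (n + 1) {a} = {F n a} := by
  ext y; simp [mem_F_succ, eq_comm]

lemma F_doubleton (n : ℕ) (a b : ZFSet) : F (n + 1) {a, b} = {F n a, F n b} := by
  ext y
  simp only [mem_F_succ, ZFSet.mem_pair]
  constructor
  · rintro ⟨x, (rfl | rfl), rfl⟩ <;> simp
  · rintro (rfl | rfl)
    exacts [⟨a, Or.inl rfl, rfl⟩, ⟨b, Or.inr rfl, rfl⟩]

lemma F_pair (n : ℕ) (a b : ZFSet) :
    F (n + 2) (ZFSet.pair a b) = ZFSet.pair (F n a) (F n b) := by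
  show F (n + 1 + 1) _ = _
  unfold ZFSet.pair
  rw [show ({{a}, {a, b}} : ZFSet) = ({({a} : ZFSet), ({a, b} : ZFSet)} : ZFSet) from rfl]
  ext y
  simp only [mem_F_succ, ZFSet.mem_pair]
  constructor
  · rintro ⟨x, (rfl | rfl), rfl⟩
    · left; exact F_singleton n a
    · right; exact F_doubleton n a b
  · rintro (rfl | rfl)
    exacts [⟨{a}, Or.inl rfl, F_singleton n a⟩, ⟨{a, b}, Or.inr rfl, F_doubleton n a b⟩]

theorem stmt_15 (A B : ZFSet) (n : ℕ) (hn : 1 ≤ n) :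
    F (n + 2) (ZFSet.prod A B) = ZFSet.prod (F n A) (F n B) := by
  obtain ⟨m, rfl⟩ := Nat.exists_eq_add_of_le' hn
  ext y
  simp only [show m + 1 + 2 = (m + 2) + 1 from by ring, mem_F_succ, ZFSet.mem_prod]
  constructor
  · rintro ⟨x, ⟨a, ha, b, hb, rfl⟩, rfl⟩
    exact ⟨F m a, ⟨a, ha, rfl⟩, F m b, ⟨b, hb, rfl⟩, (F_pair m a b).symm ▸ rfl⟩
  · rintro ⟨a', ha', b', hb', rfl⟩
    obtain ⟨a, ha, rfl⟩ := ha'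
    obtain ⟨b, hb, rfl⟩ := hb'
    exact ⟨ZFSet.pair a b, ⟨a, ha, b, hb, rfl⟩, F_pair m a b⟩
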